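/- arXiv:1701.06024 — 3 statements merged into one kernel-verified Lean document; each statement's English description precedes it below -/
import Mathlib

section
/- Let g be a real polynomial of degree n ≥ 1 and define Φ(t) = g(e^t). Then for any M > 0, the set {t ∈ ℝ : |Φ(t)| ≥ M} can be written as a disjoint union of at most 3n intervals on each of which Φ' is monotone. -/
/-!
Write `Φ(t) = g(eᵗ)`. Then `Φ' = q(eᵗ)` with `q = X g'` and `Φ'' = (X q')(eᵗ)`, so every point
where `|Φ| = M` or `Φ'' = 0` is the logarithm of a positive root of `(g² - M²) q'`, a nonzero
polynomial of degree `2n + (n - 1)`. These at most `3n - 1` breakpoints cut `ℝ` into at most `3n`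
cells. On a cell `|Φ| - M` and `Φ''` vanish at most at the left endpoint, so by the intermediate
value theorem the cell meets `{|Φ| ≥ M}` in an interval, and by Darboux's theorem `Φ''` has constant
sign in the interior of the cell, making `Φ'` monotone there.
-/

open Polynomial Set

section CountLE

variable {α : Type*} [LinearOrder α] (B : Finset α)

/-- The cells cut out by the points of `B` are the fibres of this counting function. -/
def countLE (t : α) : ℕ := (B.filter (· ≤ t)).card

lemma monotone_countLE : Monotone (countLE B) := fun _ _ hst =>
  Finset.card_le_card <| Finset.monotone_filter_right B fun _ _ hb => hb.trans hst

lemma countLE_le_card (t : α) : countLE B t ≤ B.card :=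
  Finset.card_le_card (Finset.filter_subset _ _)

lemma ordConnected_preimage_countLE (j : ℕ) : (countLE B ⁻¹' {j}).OrdConnected :=
  ordConnected_singleton.preimage_mono (monotone_countLE B)

lemma notMem_of_countLE_eq {a b s : α} (hab : countLE B a = countLE B b) (hs : s ∈ Ioc a b) :
    s ∉ B := by
  intro hsB
  have hssub : B.filter (· ≤ a) ⊂ B.filter (· ≤ b) :=
    (Finset.ssubset_iff_of_subset <| Finset.monotone_filter_right B fun _ _ hc =>
      hc.trans (hs.1.le.trans hs.2)).2 ⟨s, by simp [hsB, hs.2], by simp [hs.1]⟩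
  exact (Finset.card_lt_card hssub).ne hab

lemma notMem_of_mem_interior_preimage_countLE [TopologicalSpace α] [OrderTopology α]
    [DenselyOrdered α] [NoMinOrder α] {j : ℕ} {x : α} (hx : x ∈ interior (countLE B ⁻¹' {j})) :
    x ∉ B := by
  have hmem : countLE B ⁻¹' {j} ∈ nhdsWithin x (Iio x) :=
    nhdsWithin_le_nhds (mem_interior_iff_mem_nhds.1 hx)
  obtain ⟨a, ha, hax⟩ := Filter.nonempty_of_mem (Filter.inter_mem hmem self_mem_nhdsWithin)
  exact notMem_of_countLE_eq B (ha.trans (interior_subset hx).symm) ⟨hax, le_rfl⟩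

end CountLE

lemma IsPreconnected.le_of_forall_ne {X α : Type*} [TopologicalSpace X] [LinearOrder α]
    [TopologicalSpace α] [OrderClosedTopology α] {s : Set X} {f : X → α} {M : α} {a b : X}
    (hs : IsPreconnected s) (hf : ContinuousOn f s) (hne : ∀ x ∈ s, f x ≠ M) (hb : b ∈ s)
    (hMb : M ≤ f b) (ha : a ∈ s) : M ≤ f a := by
  by_contra! hlt
  obtain ⟨c, hc, hcM⟩ := hs.intermediate_value ha hb hf ⟨hlt.le, hMb⟩
  exact hne c hc hcM

lemma Convex.monotoneOn_or_antitoneOn_of_hasDerivAt_ne_zero {D : Set ℝ} {f f' : ℝ → ℝ}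
    (hD : Convex ℝ D) (hf : ContinuousOn f D) (hf' : ∀ x ∈ interior D, HasDerivAt f (f' x) x)
    (hf'₀ : ∀ x ∈ interior D, f' x ≠ 0) : MonotoneOn f D ∨ AntitoneOn f D := by
  have hderiv : ∀ x ∈ interior D, HasDerivWithinAt f (f' x) (interior D) x :=
    fun x hx => (hf' x hx).hasDerivWithinAt
  rcases hasDerivWithinAt_forall_lt_or_forall_gt_of_forall_ne hD.interior hderiv hf'₀ with
    hneg | hpos
  · exact .inr (strictAntiOn_of_hasDerivWithinAt_neg hD hf hderiv hneg).antitoneOn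
  · exact .inl (strictMonoOn_of_hasDerivWithinAt_pos hD hf hderiv hpos).monotoneOn

section Partition

variable (B : Finset ℝ) {h f f' : ℝ → ℝ} {M : ℝ}

lemma ordConnected_setOf_le_inter_preimage_countLE (hh : Continuous h)
    (hhM : ∀ x ∉ B, h x ≠ M) (j : ℕ) : ({t | M ≤ h t} ∩ countLE B ⁻¹' {j}).OrdConnected := by
  refine ⟨fun a ha b hb t ht => ⟨?_, (ordConnected_preimage_countLE B j).out ha.2 hb.2 ht⟩⟩
  rcases ht.1.eq_or_lt with rfl | hat
  · exact ha.1
  have hne : ∀ s ∈ Ioc a b, h s ≠ M :=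
    fun s hs => hhM s (notMem_of_countLE_eq B (ha.2.trans hb.2.symm) hs)
  exact isPreconnected_Ioc.le_of_forall_ne hh.continuousOn hne ⟨hat.trans_le ht.2, le_rfl⟩ hb.1
    ⟨hat, ht.2⟩

lemma monotoneOn_or_antitoneOn_preimage_countLE (hf : ∀ x, HasDerivAt f (f' x) x)
    (hf' : ∀ x ∉ B, f' x ≠ 0) (j : ℕ) :
    MonotoneOn f (countLE B ⁻¹' {j}) ∨ AntitoneOn f (countLE B ⁻¹' {j}) :=
  (ordConnected_preimage_countLE B j).convex.monotoneOn_or_antitoneOn_of_hasDerivAt_ne_zero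
    (fun x _ => (hf x).continuousAt.continuousWithinAt) (fun x _ => hf x)
    fun x hx => hf' x (notMem_of_mem_interior_preimage_countLE B hx)

theorem exists_partition_setOf_le_monotoneOn_or_antitoneOn (hh : Continuous h)
    (hhM : ∀ x ∉ B, h x ≠ M) (hf : ∀ x, HasDerivAt f (f' x) x) (hf' : ∀ x ∉ B, f' x ≠ 0) :
    ∃ I : Fin (B.card + 1) → Set ℝ, (∀ j, (I j).OrdConnected) ∧
      Pairwise (Function.onFun Disjoint I) ∧ {t | M ≤ h t} = ⋃ j, I j ∧
      ∀ j, MonotoneOn f (I j) ∨ AntitoneOn f (I j) := by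
  refine ⟨fun j => {t | M ≤ h t} ∩ countLE B ⁻¹' {(j : ℕ)},
    fun j => ordConnected_setOf_le_inter_preimage_countLE B hh hhM j, fun i j hij => ?_, ?_,
    fun j => (monotoneOn_or_antitoneOn_preimage_countLE B hf hf' j).imp
      (·.mono inter_subset_right) (·.mono inter_subset_right)⟩
  · exact ((disjoint_singleton.2 (Fin.val_injective.ne hij)).preimage _).mono
      inter_subset_right inter_subset_right
  · ext t
    simp only [mem_iUnion, mem_inter_iff, mem_preimage, mem_singleton_iff, mem_ofPred_eq]
    exact ⟨fun ht => ⟨⟨countLE B t, Nat.lt_succ_of_le (countLE_le_card B t)⟩, ht, rfl⟩,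
      fun ⟨_, ht, _⟩ => ht⟩

end Partition

namespace Polynomial

lemma natDegree_X_mul_derivative {R : Type*} [Semiring R] [Nontrivial R] [IsAddTorsionFree R]
    (p : R[X]) : (X * derivative p).natDegree = p.natDegree := by
  by_cases hp : p.natDegree = 0
  · simp [derivative_eq_zero.2 hp, hp]
  · rw [natDegree_X_mul (derivative_ne_zero.2 hp), natDegree_derivative]
    omega

lemma hasDerivAt_eval_exp (p : ℝ[X]) (t : ℝ) :
    HasDerivAt (fun t => p.eval (Real.exp t)) ((X * derivative p).eval (Real.exp t)) t :=
  ((p.hasDerivAt _).comp t (Real.hasDerivAt_exp t)).congr_deriv (by simp [mul_comm])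

noncomputable def logRoots (p : ℝ[X]) : Finset ℝ := p.roots.toFinset.image Real.log

lemma card_logRoots_le (p : ℝ[X]) : (logRoots p).card ≤ p.natDegree :=
  Finset.card_image_le.trans <| (Multiset.toFinset_card_le _).trans p.card_roots'

lemma mem_logRoots {p : ℝ[X]} (hp : p ≠ 0) {t : ℝ} (ht : p.eval (Real.exp t) = 0) :
    t ∈ logRoots p :=
  Finset.mem_image.2 ⟨_, Multiset.mem_toFinset.2 ((mem_roots hp).2 ht), Real.log_exp t⟩

end Polynomial

theorem stmt1_general (g : Polynomial ℝ) (n : ℕ) (hn : 1 ≤ n) (hdeg : g.natDegree = n)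
    (M : ℝ) :
    ∃ k : ℕ, k ≤ 3 * n ∧ ∃ I : Fin k → Set ℝ,
      (∀ j, (I j).OrdConnected) ∧
      Pairwise (Function.onFun Disjoint I) ∧
      {t : ℝ | M ≤ |g.eval (Real.exp t)|} = (⋃ j, I j) ∧
      (∀ j, MonotoneOn (deriv fun t => g.eval (Real.exp t)) (I j) ∨
            AntitoneOn (deriv fun t => g.eval (Real.exp t)) (I j)) := by
  set q := derivative (X * derivative g)
  set p := (g ^ 2 - C (M ^ 2)) * q
  have hA : (g ^ 2 - C (M ^ 2)).natDegree = 2 * n := by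
    rw [natDegree_sub_C, natDegree_pow, hdeg]
  have hq : q.natDegree = n - 1 := by rw [natDegree_derivative, natDegree_X_mul_derivative, hdeg]
  have hq0 : q ≠ 0 := derivative_ne_zero.2 (by rw [natDegree_X_mul_derivative]; omega)
  have hA0 : g ^ 2 - C (M ^ 2) ≠ 0 := ne_zero_of_natDegree_gt (n := 0) (by omega)
  have hp0 : p ≠ 0 := mul_ne_zero hA0 hq0
  have hcard : (logRoots p).card + 1 ≤ 3 * n := by
    have := card_logRoots_le p
    rw [natDegree_mul hA0 hq0, hA, hq] at this
    omega
  have hΦ' : (deriv fun t => g.eval (Real.exp t)) = fun t => (X * derivative g).eval (Real.exp t) :=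
    funext fun t => (hasDerivAt_eval_exp g t).deriv
  refine ⟨_, hcard, hΦ' ▸ exists_partition_setOf_le_monotoneOn_or_antitoneOn (logRoots p)
    (g.continuous.comp Real.continuous_exp).abs (fun x hx hxM => hx (mem_logRoots hp0 ?_))
    (hasDerivAt_eval_exp _) (fun x hx hx0 => hx (mem_logRoots hp0 ?_))⟩
  · simp [p, ← hxM, sq_abs]
  · rw [eval_mul, eval_X] at hx0
    rw [eval_mul, (mul_eq_zero.1 hx0).resolve_left (Real.exp_ne_zero x), mul_zero]

/-- For a real polynomial `g` of degree `n ≥ 1` and `Φ(t) = g(e^t)`,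
for any `M > 0` the superlevel set `{t : |Φ(t)| ≥ M}` is a disjoint union of at most
`3n` intervals on each of which `Φ'` is monotone. -/
theorem stmt1 (g : Polynomial ℝ) (n : ℕ) (hn : 1 ≤ n) (hdeg : g.natDegree = n)
    (M : ℝ) (hM : 0 < M) :
    ∃ k : ℕ, k ≤ 3 * n ∧ ∃ I : Fin k → Set ℝ,
      (∀ j, (I j).OrdConnected) ∧
      Pairwise (Function.onFun Disjoint I) ∧
      {t : ℝ | M ≤ |g.eval (Real.exp t)|} = (⋃ j, I j) ∧
      (∀ j, MonotoneOn (deriv fun t => g.eval (Real.exp t)) (I j) ∨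
            AntitoneOn (deriv fun t => g.eval (Real.exp t)) (I j)) :=
  stmt1_general g n hn hdeg M
end

section
/- Let S ⊂ 𝕂^m be a symmetric Borel set not containing 0, where 𝕂 is ℝ or ℚ_p. The Borel chromatic number of the Cayley graph Cay(𝕂^m, S) is at most countably infinite if and only if the origin is not in the topological closure of S. -/
/-!
If some colour class of a Borel colouring has positive Haar measure, Steinhaus' theorem makes its
difference set a neighbourhood of `0`, and properness forces that neighbourhood to miss `S`.
Conversely, if `V - V` misses `S` for a neighbourhood `V` of `0`, colouring each point by the first
translate of `V`, along a dense sequence, that contains it is a proper Borel colouring.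
-/

open Pointwise MeasureTheory TopologicalSpace

variable {G : Type*} [AddGroup G] [TopologicalSpace G]

theorem exists_sub_denseSeq_mem [ContinuousSub G] [SeparableSpace G] {W : Set G} (hW : IsOpen W)
    (hW0 : (0 : G) ∈ W) (x : G) : ∃ n, x - denseSeq G n ∈ W :=
  (denseRange_denseSeq G).exists_mem_open (hW.preimage (continuous_const.sub continuous_id))
    ⟨x, by simpa using hW0⟩

variable [MeasurableSpace G]

/-- `c` is a Borel proper colouring of the Cayley graph `Cay(G, S)`. -/
def IsBorelColoring {ι : Type*} (S : Set G) (c : G → ι) : Prop :=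
  (∀ i, MeasurableSet (c ⁻¹' {i})) ∧ ∀ x y, x - y ∈ S → c x ≠ c y

theorem IsBorelColoring.zero_notMem_closure [IsTopologicalAddGroup G] [BorelSpace G]
    [LocallyCompactSpace G] {ι : Type*} [Countable ι] (μ : Measure G) [μ.IsAddHaarMeasure]
    [μ.InnerRegular] {S : Set G} {c : G → ι} (hc : IsBorelColoring S c) :
    (0 : G) ∉ closure S := by
  intro h0
  obtain ⟨i, hi⟩ : ∃ i, 0 < μ (c ⁻¹' {i}) :=
    exists_measure_pos_of_not_measure_iUnion_null <| by
      simp [← Set.preimage_iUnion, Set.iUnion_of_singleton, NeZero.ne μ]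
  obtain ⟨_, ⟨x, hx, y, hy, rfl⟩, hxy⟩ :=
    mem_closure_iff_nhds.mp h0 _ (μ.sub_mem_nhds_zero_of_addHaar_pos _ (hc.1 i) hi)
  exact hc.2 x y hxy (hx.trans hy.symm)

theorem exists_isBorelColoring_of_zero_notMem_closure [IsTopologicalAddGroup G]
    [OpensMeasurableSpace G] [SeparableSpace G] {S : Set G} (h0 : (0 : G) ∉ closure S) :
    ∃ c : G → ℕ, IsBorelColoring S c := by
  classical
  obtain ⟨V, hV0, hVS⟩ := exists_nhds_half_neg (isClosed_closure.isOpen_compl.mem_nhds h0)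
  obtain ⟨W, hWV, hWo, hW0⟩ := mem_nhds_iff.mp hV0
  have hcover := exists_sub_denseSeq_mem hWo hW0
  refine ⟨fun x => Nat.find (hcover x), fun i => ?_, fun x y hxy hc => ?_⟩
  · exact measurable_find hcover
      (fun n => (hWo.preimage (continuous_id.sub continuous_const)).measurableSet)
      (measurableSet_singleton i)
  · have hx := Nat.find_spec (hcover x)
    have hy : y - denseSeq G (Nat.find (hcover x)) ∈ W := by
      rw [show Nat.find (hcover x) = Nat.find (hcover y) from hc]
      exact Nat.find_spec (hcover y)
    have := hVS _ (hWV hx) _ (hWV hy)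
    rw [sub_sub_sub_cancel_right] at this
    exact this (subset_closure hxy)

theorem exists_isBorelColoring_nat_iff [IsTopologicalAddGroup G] [BorelSpace G]
    [LocallyCompactSpace G] [SecondCountableTopology G] (S : Set G) :
    (∃ c : G → ℕ, IsBorelColoring S c) ↔ (0 : G) ∉ closure S :=
  ⟨fun ⟨_, hc⟩ => hc.zero_notMem_closure Measure.addHaar,
    exists_isBorelColoring_of_zero_notMem_closure⟩

theorem stmt10_general (m p : ℕ) [Fact p.Prime] [MeasurableSpace ℚ_[p]] [BorelSpace ℚ_[p]]
    (S : Set (Fin m → ℝ))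
    (S' : Set (Fin m → ℚ_[p])) :
    ((∃ c : (Fin m → ℝ) → ℕ, (∀ i, MeasurableSet (c ⁻¹' {i})) ∧
        ∀ x y, x - y ∈ S → c x ≠ c y) ↔ (0 : Fin m → ℝ) ∉ closure S) ∧
    ((∃ c : (Fin m → ℚ_[p]) → ℕ, (∀ i, MeasurableSet (c ⁻¹' {i})) ∧
        ∀ x y, x - y ∈ S' → c x ≠ c y) ↔ (0 : Fin m → ℚ_[p]) ∉ closure S') :=
  ⟨exists_isBorelColoring_nat_iff S, exists_isBorelColoring_nat_iff S'⟩

/-- For `𝕂 = ℝ` or `𝕂 = ℚ_p` and a symmetric Borel set `S ⊆ 𝕂^m` with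
`0 ∉ S`, the Cayley graph `Cay(𝕂^m, S)` admits a countable Borel proper coloring
(i.e. its Borel chromatic number is at most `ℵ₀`) if and only if `0` is not in the
closure of `S`. -/
theorem stmt10 (m p : ℕ) [Fact p.Prime] [MeasurableSpace ℚ_[p]] [BorelSpace ℚ_[p]]
    (S : Set (Fin m → ℝ)) (hSmeas : MeasurableSet S) (hSsym : S = -S)
    (hS0 : (0 : Fin m → ℝ) ∉ S)
    (S' : Set (Fin m → ℚ_[p])) (hSmeas' : MeasurableSet S') (hSsym' : S' = -S')
    (hS0' : (0 : Fin m → ℚ_[p]) ∉ S') :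
    ((∃ c : (Fin m → ℝ) → ℕ, (∀ i, MeasurableSet (c ⁻¹' {i})) ∧
        ∀ x y, x - y ∈ S → c x ≠ c y) ↔ (0 : Fin m → ℝ) ∉ closure S) ∧
    ((∃ c : (Fin m → ℚ_[p]) → ℕ, (∀ i, MeasurableSet (c ⁻¹' {i})) ∧
        ∀ x y, x - y ∈ S' → c x ≠ c y) ↔ (0 : Fin m → ℚ_[p]) ∉ closure S') :=
  stmt10_general m p S S'
end

section
/- Let (V, Σ, ν) be a probability space and A : L²(V) → L²(V) a nonzero bounded self-adjoint operator. Fix R ∈ ℝ and set ε = ‖A𝟙 − R𝟙‖₂ where 𝟙 is the constant function 1. Let m(A) = inf{⟨Af, f⟩ : ‖f‖₂ = 1}. If there exists an independent set I for A with ν(I) > 0 and R − m(A) − ε > 0, then ν(I) ≤ (−m(A) + 2ε) / (R − m(A) − ε). -/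
/-! Test the quadratic form on `g = 𝟙_I - ν(I) 𝟙`, the part of the indicator orthogonal to the
constants. Independence kills `⟪A 𝟙_I, 𝟙_I⟫`, so `m(A) ‖g‖² ≤ ⟪A g, g⟫` only involves `A 𝟙`, which
is `R 𝟙` up to an error of norm `ε`; since `‖g‖² = ν(I) - ν(I)²`, dividing by `ν(I)` leaves an
inequality linear in `ν(I)`. -/

open MeasureTheory
open scoped RealInnerProductSpace

section

variable {E : Type*} [NormedAddCommGroup E] [InnerProductSpace ℝ E]

theorem LinearMap.mul_norm_sq_le_inner_map_self {T : E →ₗ[ℝ] E} {m : ℝ}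
    (hm : m ∈ lowerBounds {r : ℝ | ∃ x : E, ‖x‖ = 1 ∧ ⟪T x, x⟫ = r}) (x : E) :
    m * ‖x‖ ^ 2 ≤ ⟪T x, x⟫ := by
  rcases eq_or_ne x 0 with rfl | hx
  · simp
  have hx' : ‖x‖ ≠ 0 := norm_ne_zero_iff.mpr hx
  have hunit := hm ⟨‖x‖⁻¹ • x, by simp [norm_smul, hx'], rfl⟩
  rw [map_smul, real_inner_smul_left, real_inner_smul_right, ← mul_assoc] at hunit
  calc m * ‖x‖ ^ 2 ≤ ‖x‖⁻¹ * ‖x‖⁻¹ * ⟪T x, x⟫ * ‖x‖ ^ 2 := by gcongr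
    _ = ⟪T x, x⟫ := by field_simp

theorem LinearMap.IsSymmetric.hoffman_bound {T : E →ₗ[ℝ] E} (hT : T.IsSymmetric) {m R α : ℝ}
    (hm : ∀ x, m * ‖x‖ ^ 2 ≤ ⟪T x, x⟫) {u f : E} (hu : ‖u‖ = 1) (hfu : ⟪f, u⟫ = α)
    (hff : ⟪f, f⟫ = α) (hTf : ⟪T f, f⟫ = 0) (hα : 0 < α)
    (hpos : 0 < R - m - ‖T u - R • u‖) :
    α ≤ (-m + 2 * ‖T u - R • u‖) / (R - m - ‖T u - R • u‖) := by
  set ε := ‖T u - R • u‖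
  have huu : ⟪u, u⟫ = 1 := by rw [real_inner_self_eq_norm_sq, hu, one_pow]
  have hf : ‖f‖ ≤ 1 := by
    have := real_inner_le_norm f u
    rw [hfu, hu, mul_one, ← hff, real_inner_self_eq_norm_sq] at this
    nlinarith [norm_nonneg f]
  have hTuu : ⟪T u, u⟫ ≤ R + ε := by
    have := real_inner_le_norm (T u - R • u) u
    rw [hu, mul_one, inner_sub_left, real_inner_smul_left, huu] at this
    linarith
  have hTuf : R * α - ε ≤ ⟪T u, f⟫ := by
    have := neg_le_of_abs_le ((abs_real_inner_le_norm (T u - R • u) f).trans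
      (mul_le_of_le_one_right (norm_nonneg _) hf))
    rw [inner_sub_left, real_inner_smul_left, real_inner_comm f u, hfu] at this
    linarith
  have hg := hm (f - α • u)
  have hgg : ‖f - α • u‖ ^ 2 = α - α ^ 2 := by
    rw [← real_inner_self_eq_norm_sq]
    simp only [inner_sub_left, inner_sub_right, real_inner_smul_left, real_inner_smul_right,
      hff, hfu, real_inner_comm f u, huu]
    ring
  have hTgg : ⟪T (f - α • u), f - α • u⟫ = α ^ 2 * ⟪T u, u⟫ - 2 * α * ⟪T u, f⟫ := by
    simp only [map_sub, map_smul, inner_sub_left, inner_sub_right, real_inner_smul_left,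
      real_inner_smul_right, hTf, hT f u, real_inner_comm (T u) f]
    ring
  rw [hgg, hTgg] at hg
  rw [le_div_iff₀ hpos]
  have : m * (1 - α) ≤ α * ⟪T u, u⟫ - 2 * ⟪T u, f⟫ := by
    refine le_of_mul_le_mul_left ?_ hα
    linarith
  linarith [mul_le_mul_of_nonneg_left hTuu hα.le]

end

theorem stmt12_general {V : Type*} [MeasurableSpace V] (ν : Measure V) [IsProbabilityMeasure ν]
    (A : Lp ℝ 2 ν →L[ℝ] Lp ℝ 2 ν)
    (hsa : ∀ f g : Lp ℝ 2 ν, ⟪A f, g⟫ = ⟪f, A g⟫)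
    (one : Lp ℝ 2 ν) (hone : (one : V → ℝ) =ᵐ[ν] fun _ => (1 : ℝ))
    (R mA : ℝ)
    (hm : IsGLB {r : ℝ | ∃ f : Lp ℝ 2 ν, ‖f‖ = 1 ∧ ⟪A f, f⟫ = r} mA)
    (I : Set V) (hI : MeasurableSet I) (hIpos : 0 < ν I)
    (hind : ∀ f : Lp ℝ 2 ν, (∀ᵐ x ∂ν, x ∉ I → f x = 0) → ⟪A f, f⟫ = 0)
    (hpos : R - mA - ‖A one - R • one‖ > 0) :
    (ν I).toReal ≤ (-mA + 2 * ‖A one - R • one‖) / (R - mA - ‖A one - R • one‖) := by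
  have hItop : ν I ≠ ⊤ := measure_ne_top ν I
  obtain rfl : one = indicatorConstLp 2 MeasurableSet.univ (measure_ne_top ν _) (1 : ℝ) :=
    Lp.ext (hone.trans (indicatorConstLp_coeFn.trans (by rw [Set.indicator_univ])).symm)
  set f := indicatorConstLp 2 hI hItop (1 : ℝ)
  have hfI : ∀ᵐ x ∂ν, x ∉ I → f x = 0 := by
    filter_upwards [(indicatorConstLp_coeFn : f =ᵐ[ν] _)] with x hx hxI
    rw [hx, Set.indicator_of_notMem hxI]
  have hA : (A : Lp ℝ 2 ν →ₗ[ℝ] Lp ℝ 2 ν).IsSymmetric := hsa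
  refine hA.hoffman_bound ((A : Lp ℝ 2 ν →ₗ[ℝ] Lp ℝ 2 ν).mul_norm_sq_le_inner_map_self hm.1)
    ?_ ?_ ?_ (hind f hfI) (ENNReal.toReal_pos hIpos.ne' hItop) hpos
  · rw [norm_indicatorConstLp two_ne_zero ENNReal.ofNat_ne_top, probReal_univ,
      Real.one_rpow, norm_one, one_mul]
  · rw [L2.real_inner_indicatorConstLp_one_indicatorConstLp_one, Set.inter_univ, measureReal_def]
  · rw [L2.real_inner_indicatorConstLp_one_indicatorConstLp_one, Set.inter_self, measureReal_def]

/-- Operator-theoretic Hoffman bound for the independence ratio.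
If `A` is a nonzero bounded self-adjoint operator on `L²(V, ν)` of a probability
space, `𝟙` the constant function one, `ε = ‖A𝟙 - R𝟙‖₂`, `m(A)` the infimum of the
numerical range, and `I` is a measurable independent set for `A` with `ν(I) > 0`,
then under `R - m(A) - ε > 0` we get `ν(I) ≤ (-m(A) + 2ε)/(R - m(A) - ε)`. -/
theorem stmt12 {V : Type*} [MeasurableSpace V] (ν : Measure V) [IsProbabilityMeasure ν]
    (A : Lp ℝ 2 ν →L[ℝ] Lp ℝ 2 ν) (hA0 : A ≠ 0)
    (hsa : ∀ f g : Lp ℝ 2 ν, ⟪A f, g⟫ = ⟪f, A g⟫)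
    (one : Lp ℝ 2 ν) (hone : (one : V → ℝ) =ᵐ[ν] fun _ => (1 : ℝ))
    (R mA : ℝ)
    (hm : IsGLB {r : ℝ | ∃ f : Lp ℝ 2 ν, ‖f‖ = 1 ∧ ⟪A f, f⟫ = r} mA)
    (I : Set V) (hI : MeasurableSet I) (hIpos : 0 < ν I)
    (hind : ∀ f : Lp ℝ 2 ν, (∀ᵐ x ∂ν, x ∉ I → f x = 0) → ⟪A f, f⟫ = 0)
    (hpos : R - mA - ‖A one - R • one‖ > 0) :
    (ν I).toReal ≤ (-mA + 2 * ‖A one - R • one‖) / (R - mA - ‖A one - R • one‖) :=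
  stmt12_general ν A hsa one hone R mA hm I hI hIpos hind hpos
end
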